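/- For every p ∈ (0,1) and every ω ∈ ℂ, the limit as N → ∞ of ((1−p)^N / ∏_{n=1}^N (2^n − 1)) · det B_N(p; c_0, …, c_N), where c_j = ω^j / j! for 0 ≤ j ≤ N, exists and equals ∫_0^1 e^{ωx} dμ_p(x). -/

import Mathlib

/-!
The moments `m_k = ∫ x^k dμ_p` satisfy `m_0 = 1` and `(2^k - 1) m_k = (1 - p) ∑_{j<k} C(k,j) m_j`:
this is the moment form of the self-similarity `μ_p = p · μ_p(2·) + (1 - p) · μ_p(2· - 1)`
(condition on the first digit), proved for the expansion truncated after `N` digits and passed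
to the limit `N → ∞`.

The recurrence says precisely that the first `N` rows of `B_N` annihilate `(m_0, …, m_N)`. Since
`m_0 = 1`, replacing the first column of `B_N` by `B_N (m_j)_j` does not change the determinant,
and the new first column is `(0, …, 0, ∑ c_j m_j)`; expanding along it leaves a lower triangular
minor with diagonal entries `(1 - 2^i)/(1 - p)`. So the normalised determinant is the partial sum
`∑_{j ≤ N} ω^j m_j / j!` of the series of `∫ e^{ωx} dμ_p`, which converges because `μ_p` lives
on `[0, 1]`.
-/

open MeasureTheory

/-- The probability measure on `{0,1}` (encoded as `Bool`, `false` ↔ digit `0`,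
`true` ↔ digit `1`) giving mass `p` to the digit `0` and mass `1 - p` to the digit `1`. -/
noncomputable def bernoulliBool (p : ℝ) : Measure Bool :=
  ENNReal.ofReal p • Measure.dirac false + ENNReal.ofReal (1 - p) • Measure.dirac true

/-- `ν` is the infinite product, over `n ≥ 1` (indexed here by `ℕ`, where index `n`
stands for the digit `n+1`), of the Bernoulli measures `bernoulliBool p`:
it is characterized as the projective limit of the finite product measures. -/
def IsBernoulliProduct (p : ℝ) (ν : Measure (ℕ → Bool)) : Prop :=
  IsProjectiveLimit ν fun J : Finset ℕ => Measure.pi fun _ : J => bernoulliBool p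

/-- The binary expansion map sending a 0-1 sequence `(x_n)_{n ≥ 1}` to
`∑_{n=1}^∞ x_n 2^{-n}` (index `n : ℕ` stands for the digit `n+1`). -/
noncomputable def binExpand (x : ℕ → Bool) : ℝ :=
  ∑' n : ℕ, if x n then ((2 : ℝ) ^ (n + 1))⁻¹ else 0

/-- `μ` is the Bernoulli measure `μ_p` on `ℝ`: the pushforward under the binary
expansion map of the infinite product of Bernoulli measures on `{0,1}`. -/
def IsBernoulliMeasure (p : ℝ) (μ : Measure ℝ) : Prop :=
  ∃ ν : Measure (ℕ → Bool), IsBernoulliProduct p ν ∧ μ = ν.map binExpand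

/-- The `(N+1) × (N+1)` complex Hessenberg matrix `B_N(p; c_0, …, c_N)` (1-indexed in the
paper, 0-indexed here): for `0 ≤ i < N` the row `i` (paper row `i+1`) has entries
`C(i+1, j)` for `j ≤ i`, the entry `(1 - 2^{i+1})/(1-p)` at column `j = i+1`, and `0`
for `j > i+1`; the last row (row `N`) is `(c_0, c_1, …, c_N)`. -/
noncomputable def Bmat (N : ℕ) (p : ℝ) (c : Fin (N + 1) → ℂ) :
    Matrix (Fin (N + 1)) (Fin (N + 1)) ℂ := fun i j =>
  if (i : ℕ) < N then
    if (j : ℕ) ≤ (i : ℕ) then (Nat.choose ((i : ℕ) + 1) (j : ℕ) : ℂ)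
    else if (j : ℕ) = (i : ℕ) + 1 then (1 - 2 ^ ((i : ℕ) + 1)) / (1 - (p : ℂ))
    else 0
  else c j

open Filter Topology Nat

namespace Matrix

variable {R : Type*} [CommRing R] {N : ℕ}

theorem det_eq_of_mulVec_eq_single (M : Matrix (Fin (N + 1)) (Fin (N + 1)) R)
    {v : Fin (N + 1) → R} (hv : v 0 = 1) {s : R} (hMv : M *ᵥ v = Pi.single (Fin.last N) s) :
    M.det = (-1) ^ N * s * (M.submatrix Fin.castSucc Fin.succ).det := by
  have hcol : (fun k => ∑ i, v i • M k i) = Pi.single (Fin.last N) s := by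
    rw [← hMv]; ext k; simp [mulVec, dotProduct, mul_comm]
  have := det_updateCol_sum M 0 v
  rw [hv, one_smul, hcol] at this
  rw [← this, det_succ_column_zero, Finset.sum_eq_single (Fin.last N)]
  · have hsub : (M.updateCol 0 (Pi.single (Fin.last N) s)).submatrix Fin.castSucc Fin.succ =
        M.submatrix Fin.castSucc Fin.succ := by
      ext i j
      simp [Fin.succ_ne_zero]
    simp [hsub]
  · intro i _ hi; simp [hi]
  · simp

end Matrix

section Bmat

open Matrix

variable {p : ℝ} {N : ℕ}

theorem det_Bmat_submatrix_castSucc_succ (c : Fin (N + 1) → ℂ) :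
    ((Bmat N p c).submatrix Fin.castSucc Fin.succ).det =
      ∏ i ∈ Finset.range N, (1 - (2 : ℂ) ^ (i + 1)) / (1 - p) := by
  have hlow : ((Bmat N p c).submatrix Fin.castSucc Fin.succ).BlockTriangular
      OrderDual.toDual := by
    intro a b (hab : a < b)
    simp only [submatrix_apply, Bmat, Fin.val_castSucc, Fin.val_succ, a.isLt, if_true]
    rw [if_neg (by omega), if_neg (by omega)]
  rw [det_of_isLowerTriangular _ hlow, ← Fin.prod_univ_eq_prod_range]
  refine Finset.prod_congr rfl fun a _ => ?_
  simp [Bmat]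

def MomentRecurrence (p : ℝ) (m : ℕ → ℂ) : Prop :=
  ∀ k : ℕ, ((2 : ℂ) ^ (k + 1) - 1) * m (k + 1) =
    (1 - p) * ∑ j ∈ Finset.range (k + 1), ((k + 1).choose j : ℂ) * m j

variable {m : ℕ → ℂ}

theorem sum_Bmat_mul_eq_zero (hp : (1 : ℂ) - p ≠ 0)
    (hrec : MomentRecurrence p m)
    (c : Fin (N + 1) → ℂ) {i : Fin (N + 1)} (hi : (i : ℕ) < N) :
    ∑ j, Bmat N p c i j * m j = 0 := by
  obtain ⟨k, hk⟩ := i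
  simp only at hi
  set g : ℕ → ℂ := fun n => (if n ≤ k then ((k + 1).choose n : ℂ)
    else if n = k + 1 then (1 - 2 ^ (k + 1)) / (1 - p) else 0) * m n
  have hg : ∀ j : Fin (N + 1), Bmat N p c ⟨k, hk⟩ j * m j = g j := fun j => by
    simp [g, Bmat, hi]
  have htail : ∑ n ∈ Finset.Ico (k + 2) (N + 1), g n = 0 :=
    Finset.sum_eq_zero fun n hn => by
      simp only [Finset.mem_Ico] at hn
      simp [g, show ¬ n ≤ k by omega, show n ≠ k + 1 by omega]
  have hhead : ∑ n ∈ Finset.range (k + 1), g n =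
      ∑ n ∈ Finset.range (k + 1), ((k + 1).choose n : ℂ) * m n :=
    Finset.sum_congr rfl fun n hn => by
      simp [g, show n ≤ k from Nat.lt_succ_iff.mp (Finset.mem_range.mp hn)]
  simp_rw [hg]
  rw [Fin.sum_univ_eq_sum_range g, ← Finset.sum_range_add_sum_Ico _ (by omega : k + 2 ≤ N + 1),
    htail, add_zero, Finset.sum_range_succ, hhead]
  simp only [g, if_false, if_true, not_le.mpr (Nat.lt_succ_self k)]
  field_simp
  linear_combination -hrec k

theorem Bmat_mulVec (hp : (1 : ℂ) - p ≠ 0)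
    (hrec : MomentRecurrence p m)
    (c : Fin (N + 1) → ℂ) :
    Bmat N p c *ᵥ (fun j => m j) = Pi.single (Fin.last N) (∑ j, c j * m j) := by
  ext i
  by_cases hi : i = Fin.last N
  · subst hi
    simp [mulVec, dotProduct, Bmat]
  · simp [mulVec, dotProduct, hi, sum_Bmat_mul_eq_zero hp hrec c (Fin.val_lt_last hi)]

theorem det_Bmat (hp : (1 : ℂ) - p ≠ 0) (hm0 : m 0 = 1)
    (hrec : MomentRecurrence p m)
    (c : Fin (N + 1) → ℂ) :
    (Bmat N p c).det =
      (∑ j, c j * m j) * ∏ i ∈ Finset.range N, ((2 : ℂ) ^ (i + 1) - 1) / (1 - p) := by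
  have hsign : ∏ i ∈ Finset.range N, ((2 : ℂ) ^ (i + 1) - 1) / (1 - p) =
      (-1) ^ N * ∏ i ∈ Finset.range N, (1 - (2 : ℂ) ^ (i + 1)) / (1 - p) := by
    rw [show (-1 : ℂ) ^ N = ∏ _i ∈ Finset.range N, (-1) by simp, ← Finset.prod_mul_distrib]
    exact Finset.prod_congr rfl fun i _ => by ring
  rw [det_eq_of_mulVec_eq_single _ hm0 (Bmat_mulVec hp hrec c),
    det_Bmat_submatrix_castSucc_succ, hsign]
  ring

theorem two_pow_succ_sub_one_ne_zero (n : ℕ) : (2 : ℂ) ^ (n + 1) - 1 ≠ 0 :=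
  sub_ne_zero.mpr (by exact_mod_cast (Nat.one_lt_two_pow n.succ_ne_zero).ne')

theorem normalized_det_Bmat (hp : (1 : ℂ) - p ≠ 0) (hm0 : m 0 = 1)
    (hrec : MomentRecurrence p m)
    (c : Fin (N + 1) → ℂ) :
    (1 - (p : ℂ)) ^ N / (∏ n ∈ Finset.range N, ((2 : ℂ) ^ (n + 1) - 1)) * (Bmat N p c).det =
      ∑ j, c j * m j := by
  have hprod : ∏ n ∈ Finset.range N, ((2 : ℂ) ^ (n + 1) - 1) ≠ 0 :=
    Finset.prod_ne_zero_iff.mpr fun n _ => two_pow_succ_sub_one_ne_zero n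
  rw [det_Bmat hp hm0 hrec, Finset.prod_div_distrib, Finset.prod_const, Finset.card_range]
  field_simp

end Bmat

section BernoulliDigits

variable {p : ℝ}

theorem isProbabilityMeasure_bernoulliBool (h0 : 0 ≤ p) (h1 : p ≤ 1) :
    IsProbabilityMeasure (bernoulliBool p) :=
  ⟨by simp [bernoulliBool, ← ENNReal.ofReal_add h0 (sub_nonneg.mpr h1)]⟩

theorem integral_bernoulliBool (h0 : 0 ≤ p) (h1 : p ≤ 1) {E : Type*} [NormedAddCommGroup E]
    [NormedSpace ℝ E] [CompleteSpace E] (f : Bool → E) :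
    ∫ b, f b ∂bernoulliBool p = p • f false + (1 - p) • f true := by
  rw [bernoulliBool, integral_add_measure (Integrable.of_finite.smul_measure ENNReal.ofReal_ne_top)
    (Integrable.of_finite.smul_measure ENNReal.ofReal_ne_top), integral_smul_measure,
    integral_smul_measure, integral_dirac, integral_dirac,
    ENNReal.toReal_ofReal h0, ENNReal.toReal_ofReal (sub_nonneg.mpr h1)]

theorem IsBernoulliProduct.isProbabilityMeasure {ν : Measure (ℕ → Bool)}
    (hν : IsBernoulliProduct p ν) (h0 : 0 ≤ p) (h1 : p ≤ 1) : IsProbabilityMeasure ν :=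
  have := isProbabilityMeasure_bernoulliBool h0 h1
  IsProjectiveLimit.isProbabilityMeasure hν

theorem IsBernoulliProduct.map_restrict_fin {ν : Measure (ℕ → Bool)}
    (hν : IsBernoulliProduct p ν) (h0 : 0 ≤ p) (h1 : p ≤ 1) (N : ℕ) :
    ν.map (fun x (i : Fin N) => x i) = Measure.pi fun _ : Fin N => bernoulliBool p := by
  have := isProbabilityMeasure_bernoulliBool h0 h1
  let e : Finset.range N ≃ Fin N :=
    { toFun := fun j => ⟨j, Finset.mem_range.mp j.2⟩
      invFun := fun i => ⟨i, Finset.mem_range.mpr i.2⟩ }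
  have hrestrict : (fun (x : ℕ → Bool) (i : Fin N) => x i) =
      MeasurableEquiv.piCongrLeft (fun _ : Fin N => Bool) e ∘ (Finset.range N).restrict := by
    ext x i
    rw [Function.comp_apply, show i = e ⟨i, Finset.mem_range.mpr i.2⟩ from rfl,
      MeasurableEquiv.coe_piCongrLeft, Equiv.piCongrLeft_apply_apply]
    rfl
  rw [hrestrict,
    ← Measure.map_map (MeasurableEquiv.piCongrLeft (fun _ : Fin N => Bool) e).measurable
      (Finset.measurable_restrict _), hν (Finset.range N),
    (measurePreserving_piCongrLeft (fun _ : Fin N => bernoulliBool p) e).map_eq]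

end BernoulliDigits

section BinaryExpansion

noncomputable def binDigit (b : Bool) (n : ℕ) : ℝ := if b then ((2 : ℝ) ^ (n + 1))⁻¹ else 0

theorem binDigit_nonneg (b : Bool) (n : ℕ) : 0 ≤ binDigit b n := by
  cases b <;> simp [binDigit]

theorem binDigit_le (b : Bool) (n : ℕ) : binDigit b n ≤ ((2 : ℝ) ^ (n + 1))⁻¹ := by
  cases b <;> simp [binDigit]

theorem hasSum_inv_two_pow_succ : HasSum (fun n : ℕ => ((2 : ℝ) ^ (n + 1))⁻¹) 1 := by
  convert hasSum_geometric_two' 1 using 2 with n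
  rw [pow_succ]
  ring

theorem summable_binDigit (x : ℕ → Bool) : Summable fun n => binDigit (x n) n :=
  hasSum_inv_two_pow_succ.summable.of_nonneg_of_le (fun n => binDigit_nonneg _ n)
    fun n => binDigit_le _ n

theorem binExpand_eq_tsum (x : ℕ → Bool) : binExpand x = ∑' n, binDigit (x n) n := rfl

theorem binExpand_nonneg (x : ℕ → Bool) : 0 ≤ binExpand x :=
  tsum_nonneg fun n => binDigit_nonneg _ n

theorem binExpand_le_one (x : ℕ → Bool) : binExpand x ≤ 1 :=
  hasSum_le (fun n => binDigit_le (x n) n) (summable_binDigit x).hasSum hasSum_inv_two_pow_succ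

theorem continuous_binExpand : Continuous binExpand :=
  continuous_tsum (f := fun n (x : ℕ → Bool) => binDigit (x n) n)
    (fun n => (continuous_of_discreteTopology (f := fun b => binDigit b n)).comp
      (continuous_apply n))
    hasSum_inv_two_pow_succ.summable fun n x => by
      rw [Real.norm_of_nonneg (binDigit_nonneg _ _)]
      exact binDigit_le _ _

noncomputable def partialBinExpand (N : ℕ) (y : Fin N → Bool) : ℝ :=
  ∑ i, binDigit (y i) i

theorem partialBinExpand_cons (N : ℕ) (b : Bool) (y : Fin N → Bool) :
    partialBinExpand (N + 1) (Fin.cons b y) =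
      (partialBinExpand N y + if b then 1 else 0) / 2 := by
  simp only [partialBinExpand, Fin.sum_univ_succ, Fin.cons_zero, Fin.cons_succ, Fin.val_zero,
    Fin.val_succ, add_div, Finset.sum_div]
  rw [add_comm]
  congr 1
  · refine Finset.sum_congr rfl fun i _ => ?_
    cases y i <;> simp [binDigit, pow_succ]; ring
  · cases b <;> simp [binDigit]

theorem partialBinExpand_restrict (N : ℕ) (x : ℕ → Bool) :
    partialBinExpand N (fun i => x i) = ∑ n ∈ Finset.range N, binDigit (x n) n :=
  Fin.sum_univ_eq_sum_range (fun n => binDigit (x n) n) N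

theorem tendsto_partialBinExpand (x : ℕ → Bool) :
    Tendsto (fun N => partialBinExpand N fun i => x i) atTop (𝓝 (binExpand x)) := by
  simpa only [partialBinExpand_restrict, binExpand_eq_tsum] using
    (summable_binDigit x).hasSum.tendsto_sum_nat

theorem partialBinExpand_restrict_mem_Icc (N : ℕ) (x : ℕ → Bool) :
    partialBinExpand N (fun i => x i) ∈ Set.Icc (0 : ℝ) 1 := by
  rw [partialBinExpand_restrict]
  exact ⟨Finset.sum_nonneg fun n _ => binDigit_nonneg _ n,
    ((summable_binDigit x).sum_le_tsum _ fun n _ => binDigit_nonneg _ n).trans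
      (binExpand_le_one x)⟩

end BinaryExpansion

section Moments

variable {p : ℝ}

noncomputable def partialMoment (p : ℝ) (N k : ℕ) : ℝ :=
  ∫ y, partialBinExpand N y ^ k ∂Measure.pi fun _ : Fin N => bernoulliBool p

theorem partialMoment_succ (h0 : 0 ≤ p) (h1 : p ≤ 1) (N k : ℕ) :
    2 ^ k * partialMoment p (N + 1) k = p * partialMoment p N k +
      (1 - p) * ∑ j ∈ Finset.range (k + 1), (k.choose j : ℝ) * partialMoment p N j := by
  have := isProbabilityMeasure_bernoulliBool h0 h1
  have hcons :=
    (measurePreserving_piFinSuccAbove (fun _ : Fin (N + 1) => bernoulliBool p) 0).symm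
  have hsplit : 2 ^ k * partialMoment p (N + 1) k =
      ∫ z : Bool × (Fin N → Bool), (partialBinExpand N z.2 + if z.1 then 1 else 0) ^ k
        ∂(bernoulliBool p).prod (Measure.pi fun _ => bernoulliBool p) := by
    rw [partialMoment, ← integral_const_mul,
      ← hcons.integral_comp (MeasurableEquiv.measurableEmbedding _)]
    refine integral_congr_ae (Eventually.of_forall fun z => ?_)
    simp only [MeasurableEquiv.piFinSuccAbove, MeasurableEquiv.symm_mk,
      MeasurableEquiv.coe_mk, Fin.insertNthEquiv_zero]
    change 2 ^ k * partialBinExpand (N + 1) (Fin.cons z.1 z.2) ^ k = _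
    rw [partialBinExpand_cons, div_pow, mul_div_cancel₀ _ (by positivity)]
  rw [hsplit, integral_prod _ Integrable.of_finite, integral_bernoulliBool h0 h1]
  simp only [Bool.false_eq_true, if_false, if_true, add_zero, add_pow, one_pow, mul_one,
    smul_eq_mul]
  rw [integral_finsetSum _ fun j _ => Integrable.of_finite]
  simp only [integral_mul_const, partialMoment, mul_comm]

variable {ν : Measure (ℕ → Bool)}

theorem IsBernoulliProduct.tendsto_partialMoment (hν : IsBernoulliProduct p ν) (h0 : 0 ≤ p)
    (h1 : p ≤ 1) (k : ℕ) :
    Tendsto (fun N => partialMoment p N k) atTop (𝓝 (∫ x, binExpand x ^ k ∂ν)) := by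
  have := hν.isProbabilityMeasure h0 h1
  have hmap : ∀ N, partialMoment p N k = ∫ x, partialBinExpand N (fun i => x i) ^ k ∂ν :=
    fun N => by
      rw [partialMoment, ← hν.map_restrict_fin h0 h1 N, integral_map
        (measurable_pi_lambda _ fun i => measurable_pi_apply _).aemeasurable
        (measurable_of_countable _).aestronglyMeasurable]
  simp_rw [hmap]
  refine tendsto_integral_of_dominated_convergence (fun _ => 1)
    (fun N => (Continuous.aestronglyMeasurable (by fun_prop))) (integrable_const 1)
    (fun N => Eventually.of_forall fun x => ?_)
    (Eventually.of_forall fun x =>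
      ((continuous_pow k).tendsto _).comp (tendsto_partialBinExpand x))
  obtain ⟨hnonneg, hle⟩ := partialBinExpand_restrict_mem_Icc N x
  rw [Real.norm_of_nonneg (pow_nonneg hnonneg k)]
  exact pow_le_one₀ hnonneg hle

theorem IsBernoulliProduct.moment_recurrence (hν : IsBernoulliProduct p ν) (h0 : 0 ≤ p)
    (h1 : p ≤ 1) (k : ℕ) :
    ((2 : ℝ) ^ k - 1) * ∫ x, binExpand x ^ k ∂ν =
      (1 - p) * ∑ j ∈ Finset.range k, (k.choose j : ℝ) * ∫ x, binExpand x ^ j ∂ν := by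
  set m := fun j => ∫ x, binExpand x ^ j ∂ν
  have hlim := hν.tendsto_partialMoment h0 h1
  have hright : Tendsto (fun N => 2 ^ k * partialMoment p (N + 1) k) atTop
      (𝓝 (p * m k + (1 - p) * ∑ j ∈ Finset.range (k + 1), (k.choose j : ℝ) * m j)) := by
    simp_rw [partialMoment_succ h0 h1]
    exact ((hlim k).const_mul p).add
      ((tendsto_finsetSum _ fun j _ => (hlim j).const_mul _).const_mul (1 - p))
  have hfixed := tendsto_nhds_unique
    (((hlim k).comp (tendsto_add_atTop_nat 1)).const_mul (2 ^ k)) hright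
  rw [Finset.sum_range_succ, Nat.choose_self, Nat.cast_one, one_mul] at hfixed
  linear_combination hfixed

end Moments

theorem hasSum_integral_cexp_mul {α : Type*} [MeasurableSpace α] {ν : Measure α}
    [IsFiniteMeasure ν] {f : α → ℝ} (hf : Measurable f) {C : ℝ} (hC : ∀ x, |f x| ≤ C)
    (ω : ℂ) :
    HasSum (fun k => ω ^ k / k ! * ∫ x, f x ^ k ∂ν) (∫ x, Complex.exp (ω * f x) ∂ν) := by
  have hterm : ∀ k, ∫ x, (ω * f x) ^ k / k ! ∂ν = ω ^ k / k ! * ∫ x, f x ^ k ∂ν := fun k => by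
    simp_rw [mul_pow, mul_div_right_comm, ← Complex.ofReal_pow]
    rw [integral_const_mul, integral_complex_ofReal]
  simp_rw [← hterm]
  refine hasSum_integral_of_dominated_convergence (fun k _ => (‖ω‖ * C) ^ k / k !)
    (fun k => (by fun_prop : Measurable _).aestronglyMeasurable)
    (fun k => Eventually.of_forall fun x => ?_)
    (Eventually.of_forall fun _ => Real.summable_pow_div_factorial _) (integrable_const _)
    (Eventually.of_forall fun x => ?_)
  · rw [norm_div, norm_pow, norm_mul, Complex.norm_real, Complex.norm_natCast, Real.norm_eq_abs]
    gcongr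
    exact hC x
  · rw [Complex.exp_eq_exp_ℂ]
    exact NormedSpace.expSeries_div_hasSum_exp _

theorem setIntegral_Icc_map_binExpand {E : Type*} [NormedAddCommGroup E] [NormedSpace ℝ E]
    {ν : Measure (ℕ → Bool)} {g : ℝ → E} (hg : AEStronglyMeasurable g (ν.map binExpand)) :
    ∫ x in Set.Icc (0 : ℝ) 1, g x ∂ν.map binExpand = ∫ x, g (binExpand x) ∂ν := by
  have hpre : binExpand ⁻¹' Set.Icc 0 1 = Set.univ :=
    Set.eq_univ_of_forall fun x => ⟨binExpand_nonneg x, binExpand_le_one x⟩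
  rw [Measure.restrict_map continuous_binExpand.measurable measurableSet_Icc, hpre,
    Measure.restrict_univ, integral_map continuous_binExpand.aemeasurable hg]

/-- For `p ∈ (0,1)` and `ω ∈ ℂ`,
`((1-p)^N / ∏_{n=1}^N (2^n-1)) · det B_N(p; 1, ω, ω²/2!, …, ω^N/N!) → ∫_0^1 e^{ωx} dμ_p(x)`
as `N → ∞`. -/
theorem stmt15 (p : ℝ) (hp : p ∈ Set.Ioo (0 : ℝ) 1) (μ : Measure ℝ)
    (hμ : IsBernoulliMeasure p μ) (ω : ℂ) :
    Tendsto
      (fun N : ℕ =>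
        (1 - (p : ℂ)) ^ N / (∏ n ∈ Finset.range N, ((2 : ℂ) ^ (n + 1) - 1)) *
          (Bmat N p fun j => ω ^ (j : ℕ) / (Nat.factorial (j : ℕ) : ℂ)).det)
      atTop
      (nhds (∫ x in Set.Icc (0 : ℝ) 1, Complex.exp (ω * x) ∂μ)) := by
  obtain ⟨ν, hν, rfl⟩ := hμ
  have h0 : 0 ≤ p := hp.1.le
  have h1 : p ≤ 1 := hp.2.le
  have := hν.isProbabilityMeasure h0 h1
  have hp1 : (1 : ℂ) - p ≠ 0 := by exact_mod_cast (sub_pos.mpr hp.2).ne'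
  set m : ℕ → ℂ := fun j => ((∫ x, binExpand x ^ j ∂ν : ℝ) : ℂ)
  have hm0 : m 0 = 1 := by simp [m]
  have hrec : MomentRecurrence p m := fun k => by
    simpa [m] using congrArg ((↑) : ℝ → ℂ) (hν.moment_recurrence h0 h1 (k + 1))
  simp_rw [normalized_det_Bmat hp1 hm0 hrec,
    Fin.sum_univ_eq_sum_range (fun j => ω ^ j / j ! * m j)]
  rw [setIntegral_Icc_map_binExpand (by fun_prop)]
  have hseries := hasSum_integral_cexp_mul continuous_binExpand.measurable (C := 1)
    (fun x => abs_le.mpr ⟨by linarith [binExpand_nonneg x], binExpand_le_one x⟩) ω (ν := ν)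
  exact hseries.tendsto_sum_nat.comp (tendsto_add_atTop_nat 1)
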